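/- arXiv:2012.07312 — 3 statements merged into one kernel-verified Lean document; each statement's English description precedes it below -/
import Mathlib

section
/- If A and B are nonnegative (entrywise) square matrices of the same size with A ≥ B entrywise, then the spectral radius of A is at least the spectral radius of B. -/
/-!
Entrywise, `0 ≤ B ≤ A` propagates to `0 ≤ B ^ k ≤ A ^ k`, and the `L^∞` operator norm of a
matrix is monotone in the absolute values of its entries, so `‖B ^ k‖ ≤ ‖A ^ k‖` for every `k`.
Gelfand's formula `ρ(M) = lim ‖M ^ k‖ ^ (1 / k)` then gives `ρ(B) ≤ ρ(A)`.
-/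

open Matrix Polynomial

/-- Spectral radius of a real square matrix: the supremum of the absolute values of its
complex eigenvalues (roots of the characteristic polynomial over ℂ). -/
noncomputable def specRad {n : ℕ} (M : Matrix (Fin n) (Fin n) ℝ) : ℝ :=
  sSup {x : ℝ | ∃ μ : ℂ, ((M.map (algebraMap ℝ ℂ)).charpoly).IsRoot μ ∧ x = ‖μ‖}

open scoped Matrix.Norms.Operator ENNReal

lemma spectrum.spectralRadius_le_of_forall_nnnorm_pow_le {A : Type*} [NormedRing A]
    [NormedAlgebra ℂ A] [CompleteSpace A] {a b : A} (h : ∀ k : ℕ, ‖b ^ k‖₊ ≤ ‖a ^ k‖₊) :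
    spectralRadius ℂ b ≤ spectralRadius ℂ a :=
  le_of_tendsto_of_tendsto' (pow_nnnorm_pow_one_div_tendsto_nhds_spectralRadius b)
    (pow_nnnorm_pow_one_div_tendsto_nhds_spectralRadius a) fun k =>
      ENNReal.rpow_le_rpow (by exact_mod_cast h k) (by positivity)

namespace Matrix

lemma pow_apply_le_pow_apply {m R : Type*} [Fintype m] [DecidableEq m] [Semiring R]
    [PartialOrder R] [IsOrderedRing R] {A B : Matrix m m R} (hB : ∀ i j, 0 ≤ B i j)
    (hAB : ∀ i j, B i j ≤ A i j) (k : ℕ) (i j : m) : (B ^ k) i j ≤ (A ^ k) i j := by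
  induction k generalizing j with
  | zero => rfl
  | succ k ih =>
    rw [pow_succ, pow_succ, mul_apply, mul_apply]
    exact Finset.sum_le_sum fun l _ =>
      mul_le_mul (ih l) (hAB l j) (hB l j) ((pow_apply_nonneg hB k i l).trans (ih l))

lemma linfty_opNNNorm_le_of_nnnorm_apply_le {m n α : Type*} [Fintype m] [Fintype n]
    [SeminormedAddCommGroup α] {A B : Matrix m n α} (h : ∀ i j, ‖B i j‖₊ ≤ ‖A i j‖₊) :
    ‖B‖₊ ≤ ‖A‖₊ := by
  rw [linfty_opNNNorm_def, linfty_opNNNorm_def]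
  exact Finset.sup_mono_fun fun i _ => Finset.sum_le_sum fun j _ => h i j

lemma spectralRadius_map_ofReal_le {m : Type*} [Fintype m] [DecidableEq m]
    {A B : Matrix m m ℝ} (hB : ∀ i j, 0 ≤ B i j) (hAB : ∀ i j, B i j ≤ A i j) :
    spectralRadius ℂ (B.map (algebraMap ℝ ℂ)) ≤ spectralRadius ℂ (A.map (algebraMap ℝ ℂ)) := by
  refine spectrum.spectralRadius_le_of_forall_nnnorm_pow_le fun k => ?_
  rw [← Matrix.map_pow, ← Matrix.map_pow]
  refine linfty_opNNNorm_le_of_nnnorm_apply_le fun i j => ?_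
  have hBk := pow_apply_nonneg hB k i j
  have hBAk := pow_apply_le_pow_apply hB hAB k i j
  rw [← NNReal.coe_le_coe]
  simpa [abs_of_nonneg hBk, abs_of_nonneg (hBk.trans hBAk)] using hBAk

end Matrix

section specRad

variable {n : ℕ} {M : Matrix (Fin n) (Fin n) ℝ}

lemma specRad_nonneg (M : Matrix (Fin n) (Fin n) ℝ) : 0 ≤ specRad M :=
  Real.sSup_nonneg (by rintro _ ⟨μ, -, rfl⟩; positivity)

lemma specRad_le {r : ℝ} (hr : 0 ≤ r)
    (h : ∀ μ : ℂ, ((M.map (algebraMap ℝ ℂ)).charpoly).IsRoot μ → ‖μ‖ ≤ r) : specRad M ≤ r :=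
  Real.sSup_le (by rintro _ ⟨μ, hμ, rfl⟩; exact h μ hμ) hr

lemma norm_le_specRad {μ : ℂ} (hμ : ((M.map (algebraMap ℝ ℂ)).charpoly).IsRoot μ) :
    ‖μ‖ ≤ specRad M := by
  have hfin : {x : ℝ | ∃ μ : ℂ, ((M.map (algebraMap ℝ ℂ)).charpoly).IsRoot μ ∧ x = ‖μ‖}.Finite :=
    ((finite_setOfPred_isRoot (charpoly_monic _).ne_zero).image (‖·‖)).subset
      (by rintro _ ⟨μ, hμ, rfl⟩; exact ⟨μ, hμ, rfl⟩)
  exact le_csSup hfin.bddAbove ⟨μ, hμ, rfl⟩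

lemma spectralRadius_map_ofReal_le_specRad :
    spectralRadius ℂ (M.map (algebraMap ℝ ℂ)) ≤ ENNReal.ofReal (specRad M) :=
  iSup₂_le fun μ hμ => by
    rw [← enorm_eq_nnnorm, ← ofReal_norm]
    exact ENNReal.ofReal_le_ofReal (norm_le_specRad (mem_spectrum_iff_isRoot_charpoly.mp hμ))

end specRad

theorem spectral_radius_mono_of_nonneg {n : ℕ} (A B : Matrix (Fin n) (Fin n) ℝ)
    (hB : ∀ i j, 0 ≤ B i j) (hAB : ∀ i j, B i j ≤ A i j) :
    specRad B ≤ specRad A := by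
  refine specRad_le (specRad_nonneg A) fun μ hμ => ?_
  rw [← ENNReal.ofReal_le_ofReal_iff (specRad_nonneg A), ofReal_norm]
  calc ‖μ‖ₑ ≤ spectralRadius ℂ (B.map (algebraMap ℝ ℂ)) :=
        le_iSup₂ (f := fun k _ => (‖k‖₊ : ℝ≥0∞)) μ (mem_spectrum_iff_isRoot_charpoly.mpr hμ)
    _ ≤ spectralRadius ℂ (A.map (algebraMap ℝ ℂ)) := spectralRadius_map_ofReal_le hB hAB
    _ ≤ ENNReal.ofReal (specRad A) := spectralRadius_map_ofReal_le_specRad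
end

section
/- Waterfilling projection onto the trace-sphere of PSD matrices: let X = U(-D)Uᴴ be a Hermitian matrix with unitary U and real diagonal D. Then the projection of X (in Frobenius norm) onto the set {Q Hermitian PSD : trace(Q) = P} equals U(μI - D)⁺Uᴴ, where (·)⁺ denotes entrywise positive part on the diagonal and μ ∈ ℝ is chosen so that trace((μI - D)⁺) = P. -/
/-!
In the eigenbasis of `X` the problem decouples: conjugation by `U` preserves the Frobenius
norm, the trace and positive semidefiniteness, and dropping the off-diagonal entries of
`Uᴴ (Q - X) U` can only decrease its norm. What remains is the projection of `-D` onto the simplex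
`{q ≥ 0, ∑ q = P}`, whose solution `(μ - D)⁺` is certified by the Lagrange multiplier `μ`.
-/

open Matrix
open scoped ComplexOrder

/-- Frobenius norm of a complex matrix. -/
noncomputable def frob {m n : ℕ} (M : Matrix (Fin m) (Fin n) ℂ) : ℝ :=
  Real.sqrt (∑ i, ∑ j, ‖M i j‖ ^ 2)

theorem waterfilling_sum_sq_le {ι : Type*} [Fintype ι] (D q : ι → ℝ) (μ : ℝ)
    (hq : ∀ i, 0 ≤ q i) (hsum : ∑ i, q i = ∑ i, max (μ - D i) 0) :
    ∑ i, (max (μ - D i) 0 + D i) ^ 2 ≤ ∑ i, (q i + D i) ^ 2 := by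
  have hpointwise : ∀ i, (max (μ - D i) 0 + D i) ^ 2 + 2 * μ * (q i - max (μ - D i) 0)
      ≤ (q i + D i) ^ 2 := by
    intro i
    rcases le_or_gt (μ - D i) 0 with h | h
    · rw [max_eq_right h]
      nlinarith [hq i]
    · rw [max_eq_left h.le]
      nlinarith [sq_nonneg (q i + D i - μ)]
  have hmultiplier : ∑ i, 2 * μ * (q i - max (μ - D i) 0) = 0 := by
    rw [← Finset.mul_sum, Finset.sum_sub_distrib, hsum, sub_self, mul_zero]
  calc ∑ i, (max (μ - D i) 0 + D i) ^ 2
      = ∑ i, ((max (μ - D i) 0 + D i) ^ 2 + 2 * μ * (q i - max (μ - D i) 0)) := by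
        rw [Finset.sum_add_distrib, hmultiplier, add_zero]
    _ ≤ ∑ i, (q i + D i) ^ 2 := Finset.sum_le_sum fun i _ => hpointwise i

theorem sum_norm_sq_eq_re_trace_conjTranspose_mul_self {m n : Type*} [Fintype m] [Fintype n]
    (A : Matrix m n ℂ) : ∑ i, ∑ j, ‖A i j‖ ^ 2 = (Aᴴ * A).trace.re := by
  simp only [trace, diag, mul_apply, conjTranspose_apply, Complex.re_sum, RCLike.star_def,
    Complex.conj_mul', ← Complex.ofReal_pow, Complex.ofReal_re]
  exact Finset.sum_comm

theorem frob_unitary_conj {n : ℕ} {U : Matrix (Fin n) (Fin n) ℂ} (hU : Uᴴ * U = 1)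
    (A : Matrix (Fin n) (Fin n) ℂ) : frob (U * A * Uᴴ) = frob A := by
  have hgram : (U * A * Uᴴ)ᴴ * (U * A * Uᴴ) = U * (Aᴴ * A) * Uᴴ := by
    simp only [conjTranspose_mul, conjTranspose_conjTranspose, Matrix.mul_assoc]
    rw [← Matrix.mul_assoc Uᴴ U, hU, Matrix.one_mul]
  rw [frob, frob, sum_norm_sq_eq_re_trace_conjTranspose_mul_self,
    sum_norm_sq_eq_re_trace_conjTranspose_mul_self, hgram, trace_mul_cycle,
    ← Matrix.mul_assoc, hU, Matrix.one_mul]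

theorem frob_diagonal_ofReal {n : ℕ} (d : Fin n → ℝ) :
    frob (diagonal fun i => (d i : ℂ)) = √(∑ i, d i ^ 2) := by
  refine congrArg Real.sqrt (Finset.sum_congr rfl fun i _ => ?_)
  rw [Finset.sum_eq_single i (fun j _ hj => by simp [diagonal_apply_ne _ hj.symm]) (by simp),
    diagonal_apply_eq, Complex.norm_real, Real.norm_eq_abs, sq_abs]

theorem sqrt_sum_sq_re_diag_le_frob {n : ℕ} (A : Matrix (Fin n) (Fin n) ℂ) :
    √(∑ i, (A i i).re ^ 2) ≤ frob A := by
  refine Real.sqrt_le_sqrt (Finset.sum_le_sum fun i _ => ?_)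
  calc (A i i).re ^ 2 ≤ ‖A i i‖ ^ 2 := by
        rw [← sq_abs]
        exact pow_le_pow_left₀ (abs_nonneg _) (Complex.abs_re_le_norm _) 2
    _ ≤ ∑ j, ‖A i j‖ ^ 2 :=
        Finset.single_le_sum (f := fun j => ‖A i j‖ ^ 2) (fun j _ => by positivity)
          (Finset.mem_univ i)

theorem waterfilling_projection_general {n : ℕ} (P : ℝ)
    (U : Matrix (Fin n) (Fin n) ℂ) (hU : U * Uᴴ = 1)
    (D : Fin n → ℝ) (μ : ℝ) (hμ : ∑ i, max (μ - D i) 0 = P)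
    (X : Matrix (Fin n) (Fin n) ℂ)
    (hX : X = U * Matrix.diagonal (fun i => (-(D i) : ℂ)) * Uᴴ) :
    let K : Set (Matrix (Fin n) (Fin n) ℂ) := {Q | Q.PosSemidef ∧ Q.trace = (P : ℂ)}
    let Qw : Matrix (Fin n) (Fin n) ℂ :=
      U * Matrix.diagonal (fun i => ((max (μ - D i) 0 : ℝ) : ℂ)) * Uᴴ
    Qw ∈ K ∧ ∀ Q ∈ K, frob (Qw - X) ≤ frob (Q - X) := by
  intro K Qw
  have hU' : Uᴴ * U = 1 := mul_eq_one_comm.mp hU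
  refine ⟨⟨(posSemidef_diagonal_iff.mpr fun i => ?_).mul_mul_conjTranspose_same U, ?_⟩, ?_⟩
  · exact_mod_cast le_max_right (μ - D i) 0
  · rw [trace_mul_cycle, hU', Matrix.one_mul, trace_diagonal]
    exact_mod_cast hμ
  rintro Q ⟨hQ, hQtr⟩
  set Q' := Uᴴ * Q * U
  have hq : ∀ i, 0 ≤ (Q' i i).re := fun i =>
    (Complex.le_def.mp (hQ.conjTranspose_mul_mul_same U).diag_nonneg).1
  have hqsum : ∑ i, (Q' i i).re = ∑ i, max (μ - D i) 0 := by
    have htrace : Q'.trace = P := by rw [trace_mul_cycle, hU, Matrix.one_mul, hQtr]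
    simpa [trace, Complex.re_sum, hμ] using congrArg Complex.re htrace
  have hQwX : Qw - X = U * diagonal (fun i => ((max (μ - D i) 0 + D i : ℝ) : ℂ)) * Uᴴ := by
    rw [hX, ← Matrix.sub_mul, ← Matrix.mul_sub, diagonal_sub]
    simp
  have hQ_eq : Q = U * Q' * Uᴴ := by
    simp only [Q', ← Matrix.mul_assoc, hU, Matrix.one_mul]
    rw [Matrix.mul_assoc, hU, Matrix.mul_one]
  have hQX : Q - X = U * (Q' + diagonal fun i => (D i : ℂ)) * Uᴴ := by
    rw [hX, hQ_eq, ← Matrix.sub_mul, ← Matrix.mul_sub, sub_eq_add_neg, diagonal_neg]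
    simp
  calc frob (Qw - X) = √(∑ i, (max (μ - D i) 0 + D i) ^ 2) := by
        rw [hQwX, frob_unitary_conj hU', frob_diagonal_ofReal]
    _ ≤ √(∑ i, ((Q' i i).re + D i) ^ 2) :=
        Real.sqrt_le_sqrt (waterfilling_sum_sq_le D _ μ hq hqsum)
    _ ≤ frob (Q - X) := by
        rw [hQX, frob_unitary_conj hU']
        simpa using sqrt_sum_sq_re_diag_le_frob (Q' + diagonal fun i => (D i : ℂ))

theorem waterfilling_projection {n : ℕ} (P : ℝ) (hP : 0 < P)
    (U : Matrix (Fin n) (Fin n) ℂ) (hU : U * Uᴴ = 1) (hU' : Uᴴ * U = 1)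
    (D : Fin n → ℝ) (μ : ℝ) (hμ : ∑ i, max (μ - D i) 0 = P)
    (X : Matrix (Fin n) (Fin n) ℂ)
    (hX : X = U * Matrix.diagonal (fun i => (-(D i) : ℂ)) * Uᴴ) :
    let K : Set (Matrix (Fin n) (Fin n) ℂ) := {Q | Q.PosSemidef ∧ Q.trace = (P : ℂ)}
    let Qw : Matrix (Fin n) (Fin n) ℂ :=
      U * Matrix.diagonal (fun i => ((max (μ - D i) 0 : ℝ) : ℂ)) * Uᴴ
    Qw ∈ K ∧ ∀ Q ∈ K, frob (Qw - X) ≤ frob (Q - X) :=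
  waterfilling_projection_general P U hU D μ hμ X hX
end

section
/- Projection distance under trace-budget perturbation: for a fixed Hermitian matrix Y and powers P, P' > 0, the projections of Y onto the sets {Q PSD : trace Q = P} and {Q PSD : trace Q = P'} satisfy ‖[Y]_{P} - [Y]_{P'}‖_F ≤ |P - P'|. -/
/-!
Both projections satisfy the variational inequality of a metric projection onto a convex set.
For `P' ≤ P` put `c = (P - P') / P`; then `QP' + c • QP` is feasible at budget `P` and
`(1 - c) • QP` at budget `P'`. Testing each variational inequality at these points and adding
gives `‖QP - QP'‖² ≤ ⟪QP - QP', c • QP⟫`, hence `‖QP - QP'‖ ≤ c ‖QP‖ ≤ c P = P - P'`. Here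
`‖QP‖_F ≤ tr QP` because a positive semidefinite matrix is a sum of rank-one matrices `v vᴴ`,
whose Frobenius norm equals their trace.
-/

open Matrix
open scoped ComplexOrder

open scoped InnerProductSpace

section Projection

variable {F : Type*} [NormedAddCommGroup F] [InnerProductSpace ℝ F]

theorem inner_sub_nonneg_of_isMinOn {S : Set F} (hS : Convex ℝ S) {y a q : F} (ha : a ∈ S)
    (hmin : IsMinOn (‖· - y‖) S a) (hq : q ∈ S) : 0 ≤ ⟪a - y, q - a⟫_ℝ := by
  have hinf : ‖y - a‖ = ⨅ w : S, ‖y - w‖ := by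
    simp_rw [norm_sub_rev y]
    exact (hmin.iInf_eq ha).symm
  have := (norm_eq_iInf_iff_real_inner_le_zero hS ha).mp hinf q hq
  rwa [← neg_sub, inner_neg_left, neg_nonpos] at this

theorem norm_sub_le_of_inner_nonneg {y a b w : F} (ha : 0 ≤ ⟪a - y, b + w - a⟫_ℝ)
    (hb : 0 ≤ ⟪b - y, a - w - b⟫_ℝ) : ‖a - b‖ ≤ ‖w‖ := by
  have hsum : ⟪a - y, b + w - a⟫_ℝ + ⟪b - y, a - w - b⟫_ℝ = ⟪a - b, w⟫_ℝ - ‖a - b‖ ^ 2 := by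
    rw [← real_inner_self_eq_norm_sq]
    simp only [inner_sub_left, inner_sub_right, inner_add_right]
    ring
  have hsq : ‖a - b‖ ^ 2 ≤ ‖a - b‖ * ‖w‖ := by
    linarith [real_inner_le_norm (a - b) w]
  nlinarith [norm_nonneg (a - b), norm_nonneg w]

end Projection

namespace PointedCone

section Slice

variable {E : Type*} [AddCommGroup E] [Module ℝ E]

def slice (K : PointedCone ℝ E) (τ : E →ₗ[ℝ] ℝ) (P : ℝ) : Set E := {x | x ∈ K ∧ τ x = P}

variable {K : PointedCone ℝ E} {τ : E →ₗ[ℝ] ℝ}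

theorem convex_slice (P : ℝ) : Convex ℝ (K.slice τ P) :=
  K.convex.inter (convex_hyperplane τ.isLinear P)

theorem add_mem_slice {a b : E} {P P' : ℝ} (ha : a ∈ K.slice τ P) (hb : b ∈ K.slice τ P') :
    a + b ∈ K.slice τ (P + P') :=
  ⟨K.add_mem ha.1 hb.1, by rw [map_add, ha.2, hb.2]⟩

theorem smul_mem_slice {a : E} {P c : ℝ} (hc : 0 ≤ c) (ha : a ∈ K.slice τ P) :
    c • a ∈ K.slice τ (c * P) :=
  ⟨K.smul_mem hc ha.1, by rw [map_smul, ha.2, smul_eq_mul]⟩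

end Slice

variable {F : Type*} [NormedAddCommGroup F] [InnerProductSpace ℝ F]
  {K : PointedCone ℝ F} {τ : F →ₗ[ℝ] ℝ} (hτ : ∀ x ∈ K, ‖x‖ ≤ τ x)
include hτ

theorem norm_sub_le_of_isMinOn_slice_of_le {y a b : F} {P P' : ℝ} (hP' : 0 ≤ P') (hle : P' ≤ P)
    (ha : a ∈ K.slice τ P) (hmina : IsMinOn (‖· - y‖) (K.slice τ P) a)
    (hb : b ∈ K.slice τ P') (hminb : IsMinOn (‖· - y‖) (K.slice τ P') b) :
    ‖a - b‖ ≤ P - P' := by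
  obtain ⟨c, hc0, hc1, hcP⟩ : ∃ c : ℝ, 0 ≤ c ∧ c ≤ 1 ∧ c * P = P - P' := by
    rcases (hP'.trans hle).eq_or_lt with hP0 | hP0
    · exact ⟨0, le_rfl, zero_le_one, by linarith⟩
    · exact ⟨(P - P') / P, div_nonneg (by linarith) hP0.le,
        div_le_one_of_le₀ (by linarith) hP0.le, div_mul_cancel₀ _ hP0.ne'⟩
  have hba : b + c • a ∈ K.slice τ P := by
    simpa [hcP] using add_mem_slice hb (smul_mem_slice hc0 ha)
  have hab : a - c • a ∈ K.slice τ P' := by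
    simpa [sub_smul, sub_mul, hcP] using smul_mem_slice (sub_nonneg.mpr hc1) ha
  calc ‖a - b‖ ≤ ‖c • a‖ :=
        norm_sub_le_of_inner_nonneg (inner_sub_nonneg_of_isMinOn (convex_slice P) ha hmina hba)
          (inner_sub_nonneg_of_isMinOn (convex_slice P') hb hminb hab)
    _ = c * ‖a‖ := by rw [norm_smul, Real.norm_of_nonneg hc0]
    _ ≤ c * P := mul_le_mul_of_nonneg_left (ha.2 ▸ hτ a ha.1) hc0
    _ = P - P' := hcP

theorem norm_sub_le_of_isMinOn_slice {y a b : F} {P P' : ℝ} (hP : 0 ≤ P) (hP' : 0 ≤ P')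
    (ha : a ∈ K.slice τ P) (hmina : IsMinOn (‖· - y‖) (K.slice τ P) a)
    (hb : b ∈ K.slice τ P') (hminb : IsMinOn (‖· - y‖) (K.slice τ P') b) :
    ‖a - b‖ ≤ |P - P'| := by
  rcases le_total P' P with hle | hle
  · rw [abs_of_nonneg (sub_nonneg.mpr hle)]
    exact norm_sub_le_of_isMinOn_slice_of_le hτ hP' hle ha hmina hb hminb
  · rw [abs_sub_comm, abs_of_nonneg (sub_nonneg.mpr hle), norm_sub_rev]
    exact norm_sub_le_of_isMinOn_slice_of_le hτ hP hle hb hminb ha hmina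

end PointedCone

namespace Matrix

def posSemidefCone (𝕜 n : Type*) [RCLike 𝕜] [Fintype n] : PointedCone ℝ (Matrix n n 𝕜) where
  carrier := {A | A.PosSemidef}
  add_mem' := PosSemidef.add
  zero_mem' := PosSemidef.zero
  smul_mem' c _ hA := hA.smul (a := (c : ℝ)) c.2

noncomputable def toEuclideanFlat (m n : ℕ) :
    Matrix (Fin m) (Fin n) ℂ ≃ₗ[ℝ] EuclideanSpace ℂ (Fin m × Fin n) :=
  (ofLinearEquiv ℝ).symm ≪≫ₗ (LinearEquiv.curry ℝ ℂ _ _).symm ≪≫ₗ (WithLp.linearEquiv 2 ℝ _).symm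

theorem frob_eq_norm_toEuclideanFlat {m n : ℕ} (M : Matrix (Fin m) (Fin n) ℂ) :
    frob M = ‖toEuclideanFlat m n M‖ := by
  rw [EuclideanSpace.norm_eq, frob, Fintype.sum_prod_type]
  rfl

theorem frob_vecMulVec_star {n : ℕ} (v : Fin n → ℂ) :
    frob (vecMulVec v (star v)) = (vecMulVec v (star v)).trace.re := by
  have hdiag : (vecMulVec v (star v)).trace.re = ∑ i, ‖v i‖ ^ 2 := by
    simp [trace_vecMulVec, dotProduct, Complex.mul_conj, Complex.normSq_eq_norm_sq,
      -Complex.ofReal_pow]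
  rw [hdiag, frob, ← Real.sqrt_sq (Finset.sum_nonneg fun i _ => sq_nonneg ‖v i‖), sq,
    Finset.sum_mul_sum]
  simp [vecMulVec_apply, mul_pow]

theorem PosSemidef.frob_le_re_trace {n : ℕ} {A : Matrix (Fin n) (Fin n) ℂ} (hA : A.PosSemidef) :
    frob A ≤ A.trace.re := by
  obtain ⟨m, v, rfl⟩ := posSemidef_iff_eq_sum_vecMulVec.mp hA
  rw [frob_eq_norm_toEuclideanFlat, map_sum, trace_sum, Complex.re_sum]
  refine (norm_sum_le _ _).trans_eq (Finset.sum_congr rfl fun k _ => ?_)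
  rw [← frob_eq_norm_toEuclideanFlat, frob_vecMulVec_star]

theorem PosSemidef.trace_eq_ofReal_iff {n : Type*} [Fintype n] {A : Matrix n n ℂ}
    (hA : A.PosSemidef) {P : ℝ} : A.trace = P ↔ A.trace.re = P := by
  have him : A.trace.im = 0 := (Complex.nonneg_iff.mp hA.trace_nonneg).2.symm
  simp [Complex.ext_iff, him]

noncomputable def flatPosSemidefCone (n : ℕ) : PointedCone ℝ (EuclideanSpace ℂ (Fin n × Fin n)) :=
  (posSemidefCone ℂ (Fin n)).comap (toEuclideanFlat n n).symm.toLinearMap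

noncomputable def flatReTrace (n : ℕ) : EuclideanSpace ℂ (Fin n × Fin n) →ₗ[ℝ] ℝ :=
  Complex.reLm ∘ₗ traceLinearMap (Fin n) ℝ ℂ ∘ₗ (toEuclideanFlat n n).symm.toLinearMap

theorem norm_le_flatReTrace {n : ℕ} :
    ∀ x ∈ flatPosSemidefCone n, ‖x‖ ≤ flatReTrace n x := by
  intro x hx
  obtain ⟨A, rfl⟩ := (toEuclideanFlat n n).surjective x
  simpa [← frob_eq_norm_toEuclideanFlat, flatReTrace] using
    PosSemidef.frob_le_re_trace (PointedCone.mem_comap.mp hx)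

theorem toEuclideanFlat_mem_slice_iff {n : ℕ} {A : Matrix (Fin n) (Fin n) ℂ} {P : ℝ} :
    toEuclideanFlat n n A ∈ (flatPosSemidefCone n).slice (flatReTrace n) P ↔
      A.PosSemidef ∧ A.trace = P := by
  refine and_congr_right fun hA => ?_
  simpa [flatReTrace] using (PosSemidef.trace_eq_ofReal_iff hA).symm

theorem isMinOn_toEuclideanFlat_slice {n : ℕ} {Y A : Matrix (Fin n) (Fin n) ℂ} {P : ℝ}
    (hmin : ∀ Q : Matrix (Fin n) (Fin n) ℂ, Q.PosSemidef → Q.trace = (P : ℂ) →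
      frob (A - Y) ≤ frob (Q - Y)) :
    IsMinOn (‖· - toEuclideanFlat n n Y‖) ((flatPosSemidefCone n).slice (flatReTrace n) P)
      (toEuclideanFlat n n A) := by
  refine isMinOn_iff.mpr fun x hx => ?_
  obtain ⟨Q, rfl⟩ := (toEuclideanFlat n n).surjective x
  rw [toEuclideanFlat_mem_slice_iff] at hx
  simpa [frob_eq_norm_toEuclideanFlat] using hmin Q hx.1 hx.2

end Matrix

theorem projection_distance_trace_budget_general {n : ℕ} (Y : Matrix (Fin n) (Fin n) ℂ)
    (P P' : ℝ) (hP : 0 < P) (hP' : 0 < P')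
    (QP QP' : Matrix (Fin n) (Fin n) ℂ)
    (hQP : QP.PosSemidef) (htr : QP.trace = (P : ℂ))
    (hmin : ∀ Q : Matrix (Fin n) (Fin n) ℂ, Q.PosSemidef → Q.trace = (P : ℂ) →
      frob (QP - Y) ≤ frob (Q - Y))
    (hQP' : QP'.PosSemidef) (htr' : QP'.trace = (P' : ℂ))
    (hmin' : ∀ Q : Matrix (Fin n) (Fin n) ℂ, Q.PosSemidef → Q.trace = (P' : ℂ) →
      frob (QP' - Y) ≤ frob (Q - Y)) :
    frob (QP - QP') ≤ |P - P'| := by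
  have key := PointedCone.norm_sub_le_of_isMinOn_slice norm_le_flatReTrace hP.le hP'.le
    (toEuclideanFlat_mem_slice_iff.mpr ⟨hQP, htr⟩) (isMinOn_toEuclideanFlat_slice hmin)
    (toEuclideanFlat_mem_slice_iff.mpr ⟨hQP', htr'⟩) (isMinOn_toEuclideanFlat_slice hmin')
  rwa [frob_eq_norm_toEuclideanFlat, map_sub]

theorem projection_distance_trace_budget {n : ℕ} (Y : Matrix (Fin n) (Fin n) ℂ)
    (hY : Y.IsHermitian) (P P' : ℝ) (hP : 0 < P) (hP' : 0 < P')
    (QP QP' : Matrix (Fin n) (Fin n) ℂ)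
    (hQP : QP.PosSemidef) (htr : QP.trace = (P : ℂ))
    (hmin : ∀ Q : Matrix (Fin n) (Fin n) ℂ, Q.PosSemidef → Q.trace = (P : ℂ) →
      frob (QP - Y) ≤ frob (Q - Y))
    (hQP' : QP'.PosSemidef) (htr' : QP'.trace = (P' : ℂ))
    (hmin' : ∀ Q : Matrix (Fin n) (Fin n) ℂ, Q.PosSemidef → Q.trace = (P' : ℂ) →
      frob (QP' - Y) ≤ frob (Q - Y)) :
    frob (QP - QP') ≤ |P - P'| :=
  projection_distance_trace_budget_general Y P P' hP hP' QP QP' hQP htr hmin hQP' htr' hmin'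
end
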